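/- arXiv:1705.10391 — 5 statements merged into one kernel-verified Lean document; each statement's English description precedes it below -/
import Mathlib

section
/- Suppose H is a graph, n_0 ∈ ℕ, β_H > 0 and 0 < c_H < 1 are such that for all n ≥ n_0, every H-free graph on n vertices has at most β_H · n^{1+c_H} edges. Let G be an H-free graph with minimum degree δ ≥ 2n_0. Then Z(G) ≥ 2^{-1-2/c_H} · (δ/β_H)^{1/c_H}. -/
/-!
Let `S` be a minimum zero forcing set, `k = |S|` and `δ = δ(G)`; the first force shows `δ ≤ k`.
Run a forcing chronology from `S` until `2k` vertices are black and let `B` be the black set at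
that moment: the `k` forces made so far were made by distinct vertices whose neighbourhoods lie
in `B` (if `|V| < 2k`, take `B = V` and all of its vertices instead). So at least `|B| / 2`
vertices keep their full degree in `G[B]`, and `δ |B| / 2 ≤ 2 e(G[B]) ≤ 2 β |B|^(1+c)`, the edge
bound applying because `G[B]` is `H`-free and `|B| ≥ δ ≥ 2 n₀`. Thus `|B| ≥ (δ / 4β)^(1/c)`,
while `|B| ≤ 2k`.
-/

namespace ZeroForcing

variable {V : Type*}

/-- The set of vertices which eventually become black in the zero forcing process on `G`
starting from the initially black set `S`. -/
inductive Forced (G : SimpleGraph V) (S : Set V) : V → Prop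
  | init (v : V) (hv : v ∈ S) : Forced G S v
  | force (u w : V) (hu : Forced G S u) (hadj : G.Adj u w)
      (hothers : ∀ x, G.Adj u x → x ≠ w → Forced G S x) : Forced G S w

/-- `S` is a zero forcing set of `G` if iterating the forcing rule makes every vertex black. -/
def IsZeroForcingSet (G : SimpleGraph V) (S : Set V) : Prop := ∀ v, Forced G S v

/-- The zero forcing number of `G`: the minimum cardinality of a zero forcing set. -/
noncomputable def zeroForcingNumber (G : SimpleGraph V) [Fintype V] : ℕ :=
  sInf {k | ∃ S : Finset V, S.card = k ∧ IsZeroForcingSet G ↑S}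

/-- `G` contains a subgraph isomorphic to `H`. -/
def ContainsSubgraphCopy {W V : Type*} (H : SimpleGraph W) (G : SimpleGraph V) : Prop :=
  ∃ f : W ↪ V, ∀ a b : W, H.Adj a b → G.Adj (f a) (f b)

open Finset SimpleGraph

theorem exists_isZeroForcingSet_card_eq_zeroForcingNumber [Fintype V] (G : SimpleGraph V) :
    ∃ S : Finset V, IsZeroForcingSet G ↑S ∧ #S = zeroForcingNumber G := by
  obtain ⟨S, hcard, hS⟩ :=
    Nat.sInf_mem (s := {k | ∃ S : Finset V, #S = k ∧ IsZeroForcingSet G ↑S})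
      ⟨#(univ : Finset V), univ, rfl, fun v ↦ .init v (mem_univ v)⟩
  exact ⟨S, hS, hcard⟩

section Forcing

variable [DecidableEq V] {G : SimpleGraph V}

def ForceStep (G : SimpleGraph V) (B B' : Finset V) : Prop :=
  ∃ u w, u ∈ B ∧ w ∉ B ∧ G.Adj u w ∧ (∀ x, G.Adj u x → x = w ∨ x ∈ B) ∧ B' = insert w B

abbrev ForcesTo (G : SimpleGraph V) : Finset V → Finset V → Prop :=
  Relation.ReflTransGen (ForceStep G)

theorem ForceStep.card_eq {B B' : Finset V} (h : ForceStep G B B') : #B' = #B + 1 := by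
  obtain ⟨u, w, -, hw, -, -, rfl⟩ := h
  exact card_insert_of_notMem hw

theorem ForcesTo.subset {S B : Finset V} (h : ForcesTo G S B) : S ⊆ B := by
  induction h with
  | refl => rfl
  | tail _ hstep ih =>
    obtain ⟨u, w, -, -, -, -, rfl⟩ := hstep
    exact ih.trans (subset_insert _ _)

theorem IsZeroForcingSet.forcesTo_univ [Fintype V] {S : Finset V}
    (hS : IsZeroForcingSet G ↑S) : ForcesTo G S univ := by
  classical
  obtain ⟨B, hB, hmax⟩ := exists_max_image {B | ForcesTo G S B} card ⟨S, by simpa using .refl⟩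
  simp only [mem_filter_univ] at hB
  -- a reachable black set of maximal size is closed under forcing
  suffices ∀ v, Forced G ↑S v → v ∈ B by
    rwa [eq_univ_of_forall fun v ↦ this v (hS v)] at hB
  intro v hv
  induction hv with
  | init v hv => exact hB.subset hv
  | force u w _ hadj _ hu hothers =>
    by_contra hw
    have hstep : ForceStep G B (insert w B) :=
      ⟨u, w, hu, hw, hadj, fun x hx ↦ or_iff_not_imp_left.mpr (hothers x hx), rfl⟩
    have := hmax _ (by simpa using hB.tail hstep)
    rw [hstep.card_eq] at this
    omega

theorem ForcesTo.exists_card_eq {S C : Finset V} (h : ForcesTo G S C) {m : ℕ}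
    (hSm : #S ≤ m) (hmC : m ≤ #C) : ∃ B, ForcesTo G S B ∧ #B = m := by
  induction h with
  | refl => exact ⟨S, .refl, le_antisymm hSm hmC⟩
  | @tail B B' hSB hstep ih =>
    rw [hstep.card_eq] at hmC
    rcases Nat.lt_or_ge m (#B + 1) with hm | hm
    · exact ih (by omega)
    · exact ⟨B', hSB.tail hstep, by rw [hstep.card_eq]; omega⟩

theorem ForcesTo.exists_forcers {S B : Finset V} (h : ForcesTo G S B) :
    ∃ F ⊆ B, #S + #F = #B ∧ ∀ u ∈ F, G.neighborSet u ⊆ B := by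
  induction h with
  | refl => exact ⟨∅, by simp⟩
  | tail _ hstep ih =>
    obtain ⟨F, hFB, hcard, hF⟩ := ih
    obtain ⟨u, w, huB, hwB, hadj, hothers, rfl⟩ := hstep
    have huF : u ∉ F := fun huF ↦ hwB (hF u huF hadj)
    refine ⟨insert u F, insert_subset (mem_insert_of_mem huB) (hFB.trans (subset_insert _ _)),
      ?_, ?_⟩
    · rw [card_insert_of_notMem huF, card_insert_of_notMem hwB]
      omega
    · rintro v hv x (hx : G.Adj v x)
      rcases mem_insert.mp hv with rfl | hv
      · simpa using hothers x hx
      · exact mem_insert_of_mem (hF v hv hx)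

theorem IsZeroForcingSet.minDegree_le_card [Fintype V] [DecidableRel G.Adj] {S : Finset V}
    (hS : IsZeroForcingSet G ↑S) : G.minDegree ≤ #S := by
  rcases hS.forcesTo_univ.cases_head with hS | ⟨B, ⟨u, w, huS, -, -, hothers, -⟩, -⟩
  · cases isEmpty_or_nonempty V
    · simp
    · rw [hS, card_univ]
      exact G.minDegree_lt_card.le
  · calc G.minDegree ≤ G.degree u := G.minDegree_le_degree u
      _ = #(G.neighborFinset u) := (G.card_neighborFinset_eq_degree u).symm
      _ ≤ #(insert w (S.erase u)) := card_le_card fun x hx ↦ by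
        rw [mem_neighborFinset] at hx
        rcases hothers x hx with rfl | hxS
        · exact mem_insert_self _ _
        · exact mem_insert_of_mem (mem_erase.mpr ⟨G.ne_of_adj hx |>.symm, hxS⟩)
      _ ≤ #(S.erase u) + 1 := card_insert_le _ _
      _ = #S := card_erase_add_one huS

theorem IsZeroForcingSet.exists_closed_forcers [Fintype V] {S : Finset V}
    (hS : IsZeroForcingSet G ↑S) :
    ∃ B F : Finset V, F ⊆ B ∧ (∀ u ∈ F, G.neighborSet u ⊆ B) ∧
      #B = min (2 * #S) (Fintype.card V) ∧ #B ≤ 2 * #F := by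
  rcases le_or_gt (2 * #S) (Fintype.card V) with h | h
  · obtain ⟨B, hSB, hB⟩ := hS.forcesTo_univ.exists_card_eq (m := 2 * #S) (by omega) (by simpa)
    obtain ⟨F, hFB, hcard, hF⟩ := hSB.exists_forcers
    exact ⟨B, F, hFB, hF, by omega, by omega⟩
  · refine ⟨univ, univ, subset_rfl, fun _ _ _ _ ↦ mem_coe.2 (mem_univ _), ?_, ?_⟩ <;>
      simp only [card_univ] <;> omega

end Forcing

section Extremal

variable {W : Type*} {H : SimpleGraph W}

theorem containsSubgraphCopy_iff_isContained {G : SimpleGraph V} :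
    ContainsSubgraphCopy H G ↔ H ⊑ G := by
  rw [isContained_iff_exists_le_comap]
  rfl

theorem extremalNumber_le_of_forall_ncard_edgeSet_le {n : ℕ} {m : ℝ} (hm : 0 ≤ m)
    (h : ∀ G : SimpleGraph (Fin n), ¬ ContainsSubgraphCopy H G → (G.edgeSet.ncard : ℝ) ≤ m) :
    (extremalNumber n H : ℝ) ≤ m := by
  rw [← Fintype.card_fin n, extremalNumber_le_iff_of_nonneg H hm]
  intro G _ hG
  have := h G (containsSubgraphCopy_iff_isContained.not.mpr hG)
  rwa [← coe_edgeFinset, Set.ncard_coe_finset] at this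

end Extremal

theorem minDegree_mul_card_le_two_mul_card_edgeFinset_induce [Fintype V] {G : SimpleGraph V}
    [DecidableRel G.Adj] {s : Set V} [Fintype s] {F : Finset V} (hFs : ↑F ⊆ s)
    (hF : ∀ u ∈ F, G.neighborSet u ⊆ s) :
    G.minDegree * #F ≤ 2 * #(G.induce s).edgeFinset := by
  classical
  rw [← sum_degrees_eq_twice_card_edges]
  calc G.minDegree * #F = ∑ v ∈ F, G.minDegree := by rw [sum_const, smul_eq_mul, mul_comm]
    _ ≤ ∑ v ∈ F, G.degree v := sum_le_sum fun v _ ↦ G.minDegree_le_degree v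
    _ = ∑ v ∈ F.subtype (· ∈ s), G.degree v := (sum_subtype_of_mem _ fun v hv ↦ hFs hv).symm
    _ = ∑ v ∈ F.subtype (· ∈ s), (G.induce s).degree v :=
      sum_congr rfl fun v hv ↦ by
        convert (degree_induce_of_neighborSet_subset (hF v (mem_subtype.1 hv))).symm
    _ ≤ ∑ v, (G.induce s).degree v := sum_le_sum_of_subset (subset_univ _)

theorem rpow_one_div_le_of_mul_le_mul_rpow {a b c x : ℝ} (ha : 0 ≤ a) (hb : 0 < b) (hc : 0 < c)
    (hx : 0 < x) (h : a * x ≤ b * x ^ (1 + c)) : (a / b) ^ (1 / c) ≤ x := by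
  rw [Real.rpow_add hx, Real.rpow_one, mul_left_comm, mul_comm a] at h
  rw [one_div, Real.rpow_inv_le_iff_of_pos (by positivity) hx.le hc, div_le_iff₀' hb]
  exact le_of_mul_le_mul_left h hx

theorem two_rpow_neg_one_sub_mul_rpow (c : ℝ) {x : ℝ} (hx : 0 ≤ x) :
    (2 : ℝ) ^ (-1 - 2 / c) * x ^ (1 / c) = (x / 4) ^ (1 / c) / 2 := by
  have h4 : (4 : ℝ) ^ (1 / c) = 2 ^ (2 / c) := by
    rw [show (4 : ℝ) = 2 ^ (2 : ℝ) by norm_num, ← Real.rpow_mul zero_le_two]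
    ring_nf
  rw [Real.div_rpow hx zero_le_four, h4, Real.rpow_sub zero_lt_two, Real.rpow_neg_one]
  ring

theorem zeroForcing_of_Hfree_general {W : Type*} (H : SimpleGraph W)
    (n₀ : ℕ) (β c : ℝ) (hβ : 0 < β) (hc : 0 < c)
    (hTuran : ∀ n : ℕ, n₀ ≤ n → ∀ G' : SimpleGraph (Fin n),
      ¬ ContainsSubgraphCopy H G' → (G'.edgeSet.ncard : ℝ) ≤ β * (n : ℝ) ^ (1 + c))
    {V : Type*} [Fintype V] (G : SimpleGraph V) [DecidableRel G.Adj]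
    (hfree : ¬ ContainsSubgraphCopy H G) (hδ : 2 * n₀ ≤ G.minDegree) :
    (2 : ℝ) ^ (-1 - 2 / c) * ((G.minDegree : ℝ) / β) ^ (1 / c) ≤ zeroForcingNumber G := by
  classical
  obtain ⟨S, hS, hSZ⟩ := exists_isZeroForcingSet_card_eq_zeroForcingNumber G
  rw [← hSZ, two_rpow_neg_one_sub_mul_rpow c (by positivity), div_div, mul_comm β]
  obtain ⟨B, F, hFB, hF, hB, hBF⟩ := hS.exists_closed_forcers
  have hδS := hS.minDegree_le_card
  have hSV : #S ≤ Fintype.card V := card_le_univ S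
  rcases Nat.eq_zero_or_pos G.minDegree with hδ0 | hδ0
  · rw [hδ0, Nat.cast_zero, zero_div, Real.zero_rpow (by positivity), zero_div]
    positivity
  have hedges : (#(G.induce (B : Set V)).edgeFinset : ℝ) ≤ β * #B ^ (1 + c) := by
    refine (Nat.cast_le.2 (card_edgeFinset_le_extremalNumber (H := H) fun h ↦ hfree ?_)).trans ?_
    · exact containsSubgraphCopy_iff_isContained.2 (h.trans (Embedding.induce _).isContained)
    · rw [show Fintype.card (B : Set V) = #B from Fintype.card_coe B]
      exact extremalNumber_le_of_forall_ncard_edgeSet_le (by positivity) (hTuran _ (by omega))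
  have hcount := minDegree_mul_card_le_two_mul_card_edgeFinset_induce (coe_subset.2 hFB) hF
  have hδB : (G.minDegree : ℝ) * #B ≤ 4 * β * #B ^ (1 + c) := by
    have : (#B : ℝ) ≤ 2 * #F := by exact_mod_cast hBF
    have : (G.minDegree : ℝ) * #F ≤ 2 * #(G.induce (B : Set V)).edgeFinset := by
      exact_mod_cast hcount
    nlinarith
  have hBpos : (0 : ℝ) < #B := by norm_cast; omega
  have hBS : (#B : ℝ) ≤ 2 * #S := by norm_cast; omega
  have := rpow_one_div_le_of_mul_le_mul_rpow (by positivity) (by positivity) hc hBpos hδB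
  linarith

/-- **Theorem 2**: if every `H`-free graph on `n ≥ n₀` vertices has at most `β n^(1+c)` edges,
then every `H`-free graph `G` with minimum degree `δ ≥ 2n₀` satisfies
`Z(G) ≥ 2^(-1-2/c) (δ/β)^(1/c)`. -/
theorem zeroForcing_of_Hfree {W : Type*} [Fintype W] (H : SimpleGraph W)
    (n₀ : ℕ) (β c : ℝ) (hβ : 0 < β) (hc : 0 < c) (hc1 : c < 1)
    (hTuran : ∀ n : ℕ, n₀ ≤ n → ∀ G' : SimpleGraph (Fin n),
      ¬ ContainsSubgraphCopy H G' → (G'.edgeSet.ncard : ℝ) ≤ β * (n : ℝ) ^ (1 + c))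
    {V : Type*} [Fintype V] [Nonempty V] (G : SimpleGraph V) [DecidableRel G.Adj]
    (hfree : ¬ ContainsSubgraphCopy H G) (hδ : 2 * n₀ ≤ G.minDegree) :
    (2 : ℝ) ^ (-1 - 2 / c) * ((G.minDegree : ℝ) / β) ^ (1 / c) ≤ zeroForcingNumber G :=
  zeroForcing_of_Hfree_general H n₀ β c hβ hc hTuran G hfree hδ

end ZeroForcing
end

section
/- Let H be a graph, n_0 ∈ ℕ, β_H > 0 and 0 < c_H < 1, and suppose that every H-free graph G_1 with average degree d ≥ n_0 satisfies |V(G_1)| ≥ (d/(2β_H))^{1/c_H}. Then every H-free graph G with minimum degree δ ≥ 2n_0 satisfies Z(G) ≥ (1/2) · (δ/(4β_H))^{1/c_H}. -/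
/-!
Run the zero forcing process from a minimum zero forcing set `S` for `|S|` steps. The black set
`B` then has `2|S|` vertices, and the `|S|` vertices that have performed a force have their whole
neighbourhood in `B`, so `G[B]` has at least `|S| δ / 2` edges and average degree at least
`δ / 2 ≥ n₀`. Since `G[B]` is `H`-free, the hypothesis gives `2|S| = |B| ≥ (δ / (4β))^(1/c)`.
If every vertex turns black earlier, the same count with `B = V` applies.
-/

namespace ZeroForcing

variable {V : Type*}

open SimpleGraph Finset

section

variable {G : SimpleGraph V}

lemma Forced.mono {S T : Set V} (hST : S ⊆ T) {v : V} (h : Forced G S v) : Forced G T v := by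
  induction h with
  | init v hv => exact .init v (hST hv)
  | force u w _ hadj _ ihu ihothers => exact .force u w ihu hadj ihothers

lemma not_forced_empty (v : V) : ¬ Forced G ∅ v := by
  intro h
  induction h with
  | init v hv => exact hv
  | force u w _ _ _ ihu => exact ihu

lemma IsZeroForcingSet.nonempty [Nonempty V] {S : Set V} (hS : IsZeroForcingSet G S) :
    S.Nonempty := by
  obtain ⟨v⟩ := ‹Nonempty V›
  by_contra hempty
  rw [Set.not_nonempty_iff_eq_empty] at hempty
  exact not_forced_empty v (hempty ▸ hS v)

lemma Forced.exists_force_of_notMem {B : Set V} {v : V} (h : Forced G B v) (hv : v ∉ B) :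
    ∃ u ∈ B, ∃ w ∉ B, G.Adj u w ∧ ∀ x, G.Adj u x → x ≠ w → x ∈ B := by
  induction h with
  | init v hv' => exact absurd hv' hv
  | force u w _ hadj _ ihu ihothers =>
    by_cases hu : u ∈ B
    · by_cases hall : ∀ x, G.Adj u x → x ≠ w → x ∈ B
      · exact ⟨u, hu, w, hv, hadj, hall⟩
      · push Not at hall
        obtain ⟨x, hx, hxw, hxB⟩ := hall
        exact ihothers x hx hxw hxB
    · exact ihu hu

section Chain

variable [Fintype V] {S : Finset V}

lemma IsZeroForcingSet.exists_grow (hS : IsZeroForcingSet G S) {B U : Finset V}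
    (hSB : S ⊆ B) (hUB : U ⊆ B) (hU : ∀ u ∈ U, G.neighborSet u ⊆ B) (hB : B ≠ univ) :
    ∃ B' U' : Finset V, S ⊆ B' ∧ U' ⊆ B' ∧ #B' = #B + 1 ∧ #U' = #U + 1 ∧
      ∀ u ∈ U', G.neighborSet u ⊆ B' := by
  classical
  obtain ⟨v, hv⟩ : ∃ v, v ∉ B := by simpa [eq_univ_iff_forall] using hB
  obtain ⟨u, hu, w, hw, huw, hothers⟩ :=
    ((hS v).mono (coe_subset.2 hSB)).exists_force_of_notMem (mem_coe.not.2 hv)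
  rw [mem_coe] at hu hw
  have huU : u ∉ U := fun huU => hw (hU u huU huw)
  refine ⟨insert w B, insert u U, hSB.trans (subset_insert _ _),
    insert_subset (mem_insert_of_mem hu) (hUB.trans (subset_insert _ _)),
    card_insert_of_notMem hw, card_insert_of_notMem huU, ?_⟩
  intro u' hu' x hx
  rw [coe_insert]
  rcases mem_insert.1 hu' with rfl | hu'
  · by_cases hxw : x = w
    · exact .inl hxw
    · exact .inr (hothers x hx hxw)
  · exact .inr (hU u' hu' hx)

lemma IsZeroForcingSet.exists_chain (hS : IsZeroForcingSet G S) (t : ℕ) :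
    ∃ B U : Finset V, S ⊆ B ∧ U ⊆ B ∧ #B = #S + #U ∧ #U ≤ t ∧
      (∀ u ∈ U, G.neighborSet u ⊆ B) ∧ (#U = t ∨ B = univ) := by
  induction t with
  | zero => exact ⟨S, ∅, subset_rfl, empty_subset S, by simp, le_rfl, by simp, .inl rfl⟩
  | succ t ih =>
    obtain ⟨B, U, hSB, hUB, hBU, hUle, hU, hdone⟩ := ih
    by_cases hB : B = univ
    · exact ⟨B, U, hSB, hUB, hBU, hUle.trans t.le_succ, hU, .inr hB⟩
    have hUt : #U = t := hdone.resolve_right hB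
    obtain ⟨B', U', hSB', hUB', hB', hU', hU'B'⟩ := hS.exists_grow hSB hUB hU hB
    exact ⟨B', U', hSB', hUB', by omega, by omega, hU'B', .inl (by omega)⟩

lemma IsZeroForcingSet.exists_half_closed (hS : IsZeroForcingSet G S) :
    ∃ B U : Finset V, S ⊆ B ∧ U ⊆ B ∧ #B ≤ 2 * #S ∧ #B ≤ 2 * #U ∧
      ∀ u ∈ U, G.neighborSet u ⊆ B := by
  obtain ⟨B, U, hSB, hUB, hBU, hUS, hU, hU_eq | rfl⟩ := hS.exists_chain #S
  · exact ⟨B, U, hSB, hUB, by omega, by omega, hU⟩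
  · exact ⟨univ, univ, hSB, subset_rfl, by omega, by omega, by simp⟩

end Chain

lemma ContainsSubgraphCopy.trans {W V' : Type*} {H : SimpleGraph W} {G' : SimpleGraph V'}
    (h : ContainsSubgraphCopy H G) (f : Copy G G') : ContainsSubgraphCopy H G' := by
  obtain ⟨g, hg⟩ := h
  exact ⟨g.trans ⟨f.toHom, f.injective⟩, fun a b hab => f.toHom.map_adj (hg a b hab)⟩

noncomputable def averageDegree [Fintype V] (G : SimpleGraph V) : ℝ :=
  2 * G.edgeSet.ncard / Fintype.card V

lemma averageDegree_fin {n : ℕ} (G : SimpleGraph (Fin n)) :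
    averageDegree G = 2 * G.edgeSet.ncard / n := by
  rw [averageDegree, Fintype.card_fin]

lemma averageDegree_eq_of_iso {V' : Type*} [Fintype V] [Fintype V'] {G' : SimpleGraph V'}
    (e : G ≃g G') : averageDegree G = averageDegree G' := by
  rw [averageDegree, averageDegree, ← Nat.card_coe_set_eq, ← Nat.card_coe_set_eq,
    Nat.card_congr e.mapEdgeSet, Fintype.card_congr e.toEquiv]

lemma le_card_of_forall_fin {W : Type*} {H : SimpleGraph W} {d₀ : ℝ} {f : ℝ → ℝ}
    (hbound : ∀ n : ℕ, ∀ G₁ : SimpleGraph (Fin n), ¬ ContainsSubgraphCopy H G₁ →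
      d₀ ≤ averageDegree G₁ → f (averageDegree G₁) ≤ n)
    [Fintype V] (hfree : ¬ ContainsSubgraphCopy H G) (hd : d₀ ≤ averageDegree G) :
    f (averageDegree G) ≤ Fintype.card V := by
  let e := G.overFinIso rfl
  rw [averageDegree_eq_of_iso e] at hd ⊢
  exact hbound _ _ (fun h => hfree (h.trans e.symm.toCopy)) hd

lemma sum_degree_le_two_mul_ncard_edgeSet_induce [Fintype V] [DecidableRel G.Adj]
    {B U : Finset V} (hUB : U ⊆ B) (hU : ∀ u ∈ U, G.neighborSet u ⊆ B) :
    ∑ u ∈ U, G.degree u ≤ 2 * (G.induce (B : Set V)).edgeSet.ncard := by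
  classical
  have hdeg : ∀ b ∈ U.subtype (· ∈ (B : Set V)), (G.induce (B : Set V)).degree b = G.degree b :=
    fun b hb => by convert degree_induce_of_neighborSet_subset (hU b (mem_subtype.1 hb))
  calc ∑ u ∈ U, G.degree u
      = ∑ b ∈ U.subtype (· ∈ (B : Set V)), (G.induce (B : Set V)).degree b := by
        rw [sum_congr rfl hdeg]
        exact (sum_subtype_of_mem (G.degree ·) fun u hu => hUB hu).symm
    _ ≤ ∑ b, (G.induce (B : Set V)).degree b := sum_le_sum_of_subset (subset_univ _)
    _ = 2 * (G.induce (B : Set V)).edgeSet.ncard := by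
        rw [sum_degrees_eq_twice_card_edges, ← coe_edgeFinset, Set.ncard_coe_finset]

lemma minDegree_le_two_mul_averageDegree_induce [Fintype V] [DecidableRel G.Adj]
    {B U : Finset V} (hB : B.Nonempty) (hUB : U ⊆ B) (hBU : #B ≤ 2 * #U)
    (hU : ∀ u ∈ U, G.neighborSet u ⊆ B) :
    (G.minDegree : ℝ) ≤ 2 * averageDegree (G.induce (B : Set V)) := by
  have hsum : #U * G.minDegree ≤ 2 * (G.induce (B : Set V)).edgeSet.ncard :=
    calc #U * G.minDegree = ∑ _u ∈ U, G.minDegree := by rw [sum_const, smul_eq_mul]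
      _ ≤ ∑ u ∈ U, G.degree u := sum_le_sum fun u _ => G.minDegree_le_degree u
      _ ≤ _ := sum_degree_le_two_mul_ncard_edgeSet_induce hUB hU
  have hB' : (0 : ℝ) < #B := by exact_mod_cast hB.card_pos
  have hcard : Fintype.card (B : Set V) = #B := by simp
  rw [averageDegree, hcard, ← mul_div_assoc, le_div_iff₀ hB']
  have hsumR : (#U : ℝ) * G.minDegree ≤ 2 * (G.induce (B : Set V)).edgeSet.ncard := by
    exact_mod_cast hsum
  have hBUR : (#B : ℝ) ≤ 2 * #U := by exact_mod_cast hBU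
  nlinarith [(G.minDegree.cast_nonneg : (0 : ℝ) ≤ G.minDegree)]

end

theorem zeroForcing_of_Hfree_claim_general {W : Type*} (H : SimpleGraph W)
    (n₀ : ℕ) (β c : ℝ) (hβ : 0 < β) (hc : 0 < c)
    (hyp : ∀ n : ℕ, ∀ G₁ : SimpleGraph (Fin n), ¬ ContainsSubgraphCopy H G₁ →
      (n₀ : ℝ) ≤ 2 * (G₁.edgeSet.ncard : ℝ) / n →
      ((2 * (G₁.edgeSet.ncard : ℝ) / n) / (2 * β)) ^ (1 / c) ≤ (n : ℝ))
    {V : Type*} [Fintype V] [Nonempty V] (G : SimpleGraph V) [DecidableRel G.Adj]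
    (hfree : ¬ ContainsSubgraphCopy H G) (hδ : 2 * n₀ ≤ G.minDegree) :
    (1 / 2 : ℝ) * ((G.minDegree : ℝ) / (4 * β)) ^ (1 / c) ≤ zeroForcingNumber G := by
  obtain ⟨S, hSk, hS⟩ :
      zeroForcingNumber G ∈ {k | ∃ S : Finset V, #S = k ∧ IsZeroForcingSet G S} :=
    Nat.sInf_mem ⟨_, univ, rfl, fun v => .init v (mem_univ v)⟩
  obtain ⟨B, U, hSB, hUB, hBS, hBU, hU⟩ := hS.exists_half_closed
  set d := averageDegree (G.induce (B : Set V))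
  have hδd : (G.minDegree : ℝ) ≤ 2 * d :=
    minDegree_le_two_mul_averageDegree_induce ((coe_nonempty.1 hS.nonempty).mono hSB) hUB hBU hU
  have hn₀ : (n₀ : ℝ) ≤ d := by
    have : (2 * n₀ : ℝ) ≤ G.minDegree := by exact_mod_cast hδ
    linarith
  have hBd : (d / (2 * β)) ^ (1 / c) ≤ #B := by
    simpa using le_card_of_forall_fin (f := fun d => (d / (2 * β)) ^ (1 / c))
      (by simpa only [averageDegree_fin] using hyp)
      (fun h => hfree (h.trans (Embedding.induce _).toCopy)) hn₀
  have hBk : (#B : ℝ) ≤ 2 * zeroForcingNumber G := by exact_mod_cast hSk ▸ hBS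
  have hbase : (G.minDegree : ℝ) / (4 * β) ≤ d / (2 * β) := by
    rw [show 4 * β = 2 * (2 * β) by ring, ← div_div]
    gcongr
    linarith
  calc (1 / 2 : ℝ) * ((G.minDegree : ℝ) / (4 * β)) ^ (1 / c)
      ≤ 1 / 2 * (d / (2 * β)) ^ (1 / c) := by gcongr
    _ ≤ zeroForcingNumber G := by linarith

/-- **Claim 1**: if every `H`-free graph `G₁` with average degree `d ≥ n₀` satisfies
`|V(G₁)| ≥ (d/(2β))^(1/c)`, then every `H`-free graph `G` with minimum degree `δ ≥ 2n₀`
satisfies `Z(G) ≥ (1/2) (δ/(4β))^(1/c)`. -/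
theorem zeroForcing_of_Hfree_claim {W : Type*} [Fintype W] (H : SimpleGraph W)
    (n₀ : ℕ) (β c : ℝ) (hβ : 0 < β) (hc : 0 < c) (hc1 : c < 1)
    (hyp : ∀ n : ℕ, ∀ G₁ : SimpleGraph (Fin n), ¬ ContainsSubgraphCopy H G₁ →
      (n₀ : ℝ) ≤ 2 * (G₁.edgeSet.ncard : ℝ) / n →
      ((2 * (G₁.edgeSet.ncard : ℝ) / n) / (2 * β)) ^ (1 / c) ≤ (n : ℝ))
    {V : Type*} [Fintype V] [Nonempty V] (G : SimpleGraph V) [DecidableRel G.Adj]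
    (hfree : ¬ ContainsSubgraphCopy H G) (hδ : 2 * n₀ ≤ G.minDegree) :
    (1 / 2 : ℝ) * ((G.minDegree : ℝ) / (4 * β)) ^ (1 / c) ≤ zeroForcingNumber G :=
  zeroForcing_of_Hfree_claim_general H n₀ β c hβ hc hyp G hfree hδ

end ZeroForcing
end

section
/- Let G be an n-vertex graph which contains a k-witness ((s_1,…,s_k),(t_1,…,t_k)) such that the sets {s_1,…,s_k} and {t_1,…,t_k} are disjoint. Then Z(G) ≤ n − k. -/
namespace ZeroForcing

variable {V : Type*}

/-- A `k`-witness in `G`: tuples `s`, `t` with the `s i` pairwise distinct,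
`s i` adjacent to `t i`, and `s i` not adjacent to `t j` for `i < j`. -/
def IsWitness {V : Type*} {k : ℕ} (G : SimpleGraph V) (s t : Fin k → V) : Prop :=
  Function.Injective s ∧ (∀ i, G.Adj (s i) (t i)) ∧
    ∀ i j : Fin k, i < j → ¬ G.Adj (s i) (t j)

theorem zeroForcingNumber_le_card [Fintype V] {G : SimpleGraph V} {S : Finset V}
    (hS : IsZeroForcingSet G ↑S) : zeroForcingNumber G ≤ S.card :=
  Nat.sInf_le ⟨S, rfl, hS⟩

namespace IsWitness

variable {k : ℕ} {G : SimpleGraph V} {s t : Fin k → V}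

theorem injective_right (hw : IsWitness G s t) : Function.Injective t := by
  obtain ⟨-, hadj, hnadj⟩ := hw
  intro i j hij
  rcases lt_trichotomy i j with hlt | heq | hgt
  · exact absurd (hij ▸ hadj i) (hnadj i j hlt)
  · exact heq
  · exact absurd (hij ▸ hadj j) (hnadj j i hgt)

/-- `s i` forces `t i` once `t 0, …, t (i-1)` are black: by the witness condition its only
other neighbours in `range t` are among those. -/
theorem forced_right {S : Set V} (hw : IsWitness G s t) (hs : ∀ i, Forced G S (s i))
    (hcompl : ∀ v ∉ Set.range t, Forced G S v) (i : Fin k) : Forced G S (t i) := by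
  obtain ⟨-, hadj, hnadj⟩ := hw
  induction i using WellFoundedLT.induction with
  | ind i ih =>
    refine Forced.force (s i) (t i) (hs i) (hadj i) fun x hx hne => ?_
    by_cases hxt : x ∈ Set.range t
    · obtain ⟨j, rfl⟩ := hxt
      rcases lt_trichotomy j i with hlt | rfl | hgt
      · exact ih j hlt
      · exact absurd rfl hne
      · exact absurd hx (hnadj i j hgt)
    · exact hcompl x hxt

theorem isZeroForcingSet_compl_range (hw : IsWitness G s t)
    (hdisj : Disjoint (Set.range s) (Set.range t)) : IsZeroForcingSet G (Set.range t)ᶜ := by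
  have hcompl : ∀ v ∉ Set.range t, Forced G (Set.range t)ᶜ v := fun v hv => Forced.init v hv
  intro v
  by_cases hv : v ∈ Set.range t
  · obtain ⟨i, rfl⟩ := hv
    exact hw.forced_right (fun j => hcompl _ (hdisj.notMem_of_mem_left ⟨j, rfl⟩)) hcompl i
  · exact hcompl v hv

end IsWitness

/-- **Lemma 1 (second part)**: if `G` has `n` vertices and contains a `k`-witness
`(s, t)` with `{s₁,…,s_k}` and `{t₁,…,t_k}` disjoint, then `Z(G) ≤ n - k`. -/
theorem zeroForcing_of_disjoint_witness {V : Type*} [Fintype V] (G : SimpleGraph V)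
    (n k : ℕ) (hn : Fintype.card V = n) (s t : Fin k → V)
    (hw : IsWitness G s t) (hdisj : Disjoint (Set.range s) (Set.range t)) :
    (zeroForcingNumber G : ℤ) ≤ (n : ℤ) - (k : ℤ) := by
  classical
  set S : Finset V := (Finset.univ.image t)ᶜ
  have hS : IsZeroForcingSet G ↑S := by
    simpa [S] using hw.isZeroForcingSet_compl_range hdisj
  have hcard : S.card = n - k := by
    rw [Finset.card_compl, Finset.card_image_of_injective _ hw.injective_right, Finset.card_univ,
      Fintype.card_fin, hn]
  have hkn : k ≤ n := by
    simpa [hn] using Fintype.card_le_of_injective t hw.injective_right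
  have hZ := zeroForcingNumber_le_card hS
  omega

end ZeroForcing
end

section
/- For any positive integer k and any a, b ∈ {1,…,k}, one has Φ(a,b)/(k(a+b)) ≤ 1 − √2/2. -/
/-!
Every pair `(i, j) ∈ A × B` satisfies exactly one of `i < j`, `j < i`, `i = j`. Hence, with
`s = |A ∩ B|`, the `s(s + 1)/2` pairs of `(A ∩ B)²` with `j ≤ i` are lost and at most
`ab - s(s + 1)/2 ≤ (a + b)²/4 - s²/2` pairs are counted. Inside `[k]`, `s ≥ a + b - k`; if
`a + b ≥ k` this leaves a deficit of `(a + b - √2 k)²/4 ≥ 0` below `(1 - √2/2) k (a + b)`,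
and if `a + b < k` already `(a + b)²/4 ≤ k (a + b)/4` suffices.
-/

namespace ZeroForcing

/-- The number of pairs `(i, j) ∈ A × B` with `i < j`. -/
def pairCount (A B : Finset ℕ) : ℕ := ((A ×ˢ B).filter fun p => p.1 < p.2).card

/-- `Φ(a, b)`: the maximum of `|{(i,j) ∈ A × B : i < j}|` over subsets
`A, B ⊆ [k] = {1,…,k}` with `|A| = a` and `|B| = b`. -/
noncomputable def Phi (k a b : ℕ) : ℕ :=
  sSup {c | ∃ A B : Finset ℕ, A ⊆ Finset.Icc 1 k ∧ B ⊆ Finset.Icc 1 k ∧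
    A.card = a ∧ B.card = b ∧ c = pairCount A B}

open Finset

lemma pairCount_mono {A A' B B' : Finset ℕ} (hA : A ⊆ A') (hB : B ⊆ B') :
    pairCount A B ≤ pairCount A' B' :=
  card_le_card (filter_subset_filter _ (product_subset_product hA hB))

lemma pairCount_add_pairCount_add_card_inter (A B : Finset ℕ) :
    pairCount A B + pairCount B A + #(A ∩ B) = #A * #B := by
  have hswap : pairCount B A = #((A ×ˢ B).filter fun p => p.2 < p.1) :=
    card_nbij' Prod.swap Prod.swap (by intro p; simp +contextual) (by intro p; simp +contextual)
      (fun _ _ => rfl) (fun _ _ => rfl)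
  have hdiag : #(A ∩ B) = #((A ×ˢ B).filter fun p => p.1 = p.2) :=
    card_nbij' (fun i => (i, i)) Prod.fst (by intro i; simp +contextual)
      (by rintro ⟨i, j⟩ h; simp only [coe_filter, mem_product, Set.mem_ofPred_eq] at h
          obtain ⟨⟨hi, hj⟩, rfl⟩ := h; exact mem_inter.mpr ⟨hi, hj⟩)
      (fun _ _ => rfl)
      (by rintro ⟨i, j⟩ h; simp only [coe_filter, Set.mem_ofPred_eq] at h; rw [h.2])
  rw [hswap, hdiag, pairCount, ← card_product, card_filter, card_filter, card_filter,
    card_eq_sum_ones, ← sum_add_distrib, ← sum_add_distrib]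
  refine sum_congr rfl fun p _ => ?_
  rcases lt_trichotomy p.1 p.2 with h | h | h <;> simp [h, h.not_gt, ne_of_gt, ne_of_lt]

lemma two_mul_pairCount_self_add_card (C : Finset ℕ) :
    2 * pairCount C C + #C = #C * #C := by
  have := pairCount_add_pairCount_add_card_inter C C
  rw [inter_self] at this
  omega

lemma two_mul_pairCount_add_le (A B : Finset ℕ) :
    2 * pairCount A B + #(A ∩ B) * (#(A ∩ B) + 1) ≤ 2 * (#A * #B) := by
  have hsplit := pairCount_add_pairCount_add_card_inter A B
  have hdiag := two_mul_pairCount_self_add_card (A ∩ B)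
  have hmono : pairCount (A ∩ B) (A ∩ B) ≤ pairCount B A :=
    pairCount_mono inter_subset_right inter_subset_left
  nlinarith

lemma card_add_card_le_card_inter_add {A B : Finset ℕ} {k : ℕ} (hA : A ⊆ Icc 1 k)
    (hB : B ⊆ Icc 1 k) : #A + #B ≤ #(A ∩ B) + k := by
  have hunion : #(A ∪ B) ≤ k := by simpa using card_le_card (union_subset hA hB)
  have := card_union_add_card_inter A B
  omega

lemma le_one_sub_sqrt_two_div_two_mul {a b k s P : ℝ} (ha : 0 ≤ a) (hb : 0 ≤ b) (hs : 0 ≤ s)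
    (hsk : a + b ≤ s + k) (hP : 2 * P + s * (s + 1) ≤ 2 * (a * b)) :
    P ≤ (1 - √2 / 2) * (k * (a + b)) := by
  have hsqrt : √2 * √2 = 2 := Real.mul_self_sqrt zero_le_two
  rcases le_total k (a + b) with hk | hk
  · have hsq : 0 ≤ (a + b) ^ 2 - 2 * √2 * k * (a + b) + 2 * k ^ 2 := by
      linear_combination sq_nonneg (a + b - √2 * k) + k ^ 2 * hsqrt
    have hsk' : a + b - k ≤ s := by linarith
    nlinarith [sq_nonneg (a - b), mul_self_le_mul_self (sub_nonneg.mpr hk) hsk']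
  · have : √2 ≤ 3 / 2 := by nlinarith [Real.sqrt_nonneg 2]
    nlinarith [sq_nonneg (a - b), mul_le_mul_of_nonneg_left hk (add_nonneg ha hb)]

lemma pairCount_le_of_subset_Icc {A B : Finset ℕ} {k : ℕ} (hA : A ⊆ Icc 1 k)
    (hB : B ⊆ Icc 1 k) : (pairCount A B : ℝ) ≤ (1 - √2 / 2) * (k * (#A + #B)) := by
  have hcount : (2 * pairCount A B + #(A ∩ B) * (#(A ∩ B) + 1) : ℝ) ≤ 2 * (#A * #B) := by
    exact_mod_cast two_mul_pairCount_add_le A B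
  have hinter : (#A + #B : ℝ) ≤ #(A ∩ B) + k := by
    exact_mod_cast card_add_card_le_card_inter_add hA hB
  exact le_one_sub_sqrt_two_div_two_mul (Nat.cast_nonneg _) (Nat.cast_nonneg _)
    (Nat.cast_nonneg _) hinter hcount

lemma Phi_le {k a b : ℕ} {N : ℝ} (hN : 0 ≤ N)
    (h : ∀ A B : Finset ℕ, A ⊆ Icc 1 k → B ⊆ Icc 1 k → #A = a → #B = b → (pairCount A B : ℝ) ≤ N) :
    (Phi k a b : ℝ) ≤ N := by
  refine le_trans (Nat.cast_le.mpr (csSup_le' ?_)) (Nat.floor_le hN)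
  rintro _ ⟨A, B, hA, hB, rfl, rfl, rfl⟩
  exact Nat.le_floor (h A B hA hB rfl rfl)

theorem phi_density_le_general (k a b : ℕ) :
    (Phi k a b : ℝ) / (k * (a + b)) ≤ 1 - Real.sqrt 2 / 2 := by
  have hc : 0 ≤ 1 - √2 / 2 := by
    nlinarith [Real.sqrt_nonneg 2, Real.mul_self_sqrt (zero_le_two : (0 : ℝ) ≤ 2)]
  refine div_le_of_le_mul₀ (by positivity) hc (Phi_le (by positivity) ?_)
  rintro A B hA hB rfl rfl
  exact pairCount_le_of_subset_Icc hA hB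

/-- **Lemma 4**: for `a, b ∈ [k]`, `Φ(a,b)/(k(a+b)) ≤ 1 - √2/2`. -/
theorem phi_density_le (k a b : ℕ) (hk : 0 < k)
    (ha : a ∈ Finset.Icc 1 k) (hb : b ∈ Finset.Icc 1 k) :
    (Phi k a b : ℝ) / (k * (a + b)) ≤ 1 - Real.sqrt 2 / 2 :=
  phi_density_le_general k a b

end ZeroForcing
end

section
/- Let G be an (n,d,λ)-graph. Then for any two vertex subsets U, W of G, |d|U||W|/n − e(U,W)| ≤ λ · √(|U||W|(1 − |U|/n)(1 − |W|/n)). -/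
namespace ZeroForcing

/-- The adjacency matrix of a graph over `ℝ` is Hermitian. -/
lemma adjMatrix_isHermitian {V : Type*} [Fintype V] (G : SimpleGraph V)
    [DecidableRel G.Adj] : (G.adjMatrix ℝ).IsHermitian := by
  rw [Matrix.IsHermitian, Matrix.conjTranspose_eq_transpose_of_trivial]
  exact G.isSymm_adjMatrix

open scoped Classical in
/-- The eigenvalues of the adjacency matrix of `G`. -/
noncomputable def adjEigenvalues {n : ℕ} (G : SimpleGraph (Fin n)) : Fin n → ℝ :=
  (adjMatrix_isHermitian G).eigenvalues

/-- The smallest adjacency-matrix eigenvalue of `G`. -/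
noncomputable def lambdaMin {n : ℕ} (G : SimpleGraph (Fin n)) : ℝ :=
  ⨅ i, adjEigenvalues G i

open scoped Classical in
/-- An `(n, d, λ)`-graph: a `d`-regular graph on `n` vertices all of whose
adjacency eigenvalues except the largest one (which equals `d`) are at most `lam`
in absolute value. -/
def IsNDLGraph {n : ℕ} (G : SimpleGraph (Fin n)) (d : ℕ) (lam : ℝ) : Prop :=
  G.IsRegularOfDegree d ∧
    ∃ i₀ : Fin n, adjEigenvalues G i₀ = d ∧ ∀ i : Fin n, i ≠ i₀ → |adjEigenvalues G i| ≤ lam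

open scoped Classical in
/-- `e(U, W)`: the number of edges with one endpoint in `U` and the other in `W`,
where edges with both endpoints in `U ∩ W` are counted twice. -/
noncomputable def edgeCountBetween {n : ℕ} (G : SimpleGraph (Fin n))
    (U W : Finset (Fin n)) : ℕ :=
  ((U ×ˢ W).filter fun p => G.Adj p.1 p.2).card

open Matrix Finset SimpleGraph
open scoped RealInnerProductSpace

/-!
Put `x = 𝟙_U - (|U|/n) 𝟙` and `y = 𝟙_W - (|W|/n) 𝟙`. Since `G` is `d`-regular, `𝟙` is an
eigenvector of the adjacency matrix `A` with eigenvalue `d`; this gives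
`⟪x, A y⟫ = e(U,W) - d|U||W|/n`, `x ⟂ 𝟙` and `‖x‖² = |U|(1 - |U|/n)`.
In an orthonormal eigenbasis of `A`, all eigenvalues but one have absolute value at most `λ`
and the remaining one is `d`. If `λ < d`, the eigenvalue `d` is simple, so its eigenvector is
parallel to `𝟙 ⟂ x`. Either way `x` only has components along eigenvectors whose eigenvalues
are at most `λ` in absolute value, hence `‖A x‖ ≤ λ ‖x‖`, and Cauchy–Schwarz gives
`|⟪x, A y⟫| = |⟪A x, y⟫| ≤ λ ‖x‖ ‖y‖`.
-/

section Spectral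

variable {ι E : Type*} [Fintype ι] [NormedAddCommGroup E] [InnerProductSpace ℝ E]
  {T : E →ₗ[ℝ] E} {b : OrthonormalBasis ι ℝ E} {μ : ι → ℝ}

lemma inner_apply_eq_mul_inner_of_eigenbasis (hT : T.IsSymmetric)
    (hb : ∀ j, T (b j) = μ j • b j) (j : ι) (x : E) : ⟪b j, T x⟫ = μ j * ⟪b j, x⟫ := by
  rw [← hT, hb, real_inner_smul_left]

lemma norm_apply_le_of_eigenbasis (hT : T.IsSymmetric) (hb : ∀ j, T (b j) = μ j • b j)
    {lam : ℝ} {x : E} (hx : ∀ j, ⟪b j, x⟫ ≠ 0 → |μ j| ≤ lam) : ‖T x‖ ≤ lam * ‖x‖ := by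
  rcases eq_or_ne x 0 with rfl | hx0
  · simp
  have hlam : 0 ≤ lam := by
    obtain ⟨j, hj⟩ : ∃ j, ⟪b j, x⟫ ≠ 0 := by
      by_contra! h
      exact hx0 (by simpa [h] using (b.sum_repr' x).symm)
    exact (abs_nonneg _).trans (hx j hj)
  have hsq : ‖T x‖ ^ 2 ≤ (lam * ‖x‖) ^ 2 := by
    rw [← b.sum_sq_inner_right, mul_pow, ← b.sum_sq_inner_right, Finset.mul_sum]
    gcongr with j
    rw [inner_apply_eq_mul_inner_of_eigenbasis hT hb, mul_pow]
    rcases eq_or_ne ⟪b j, x⟫ 0 with hj | hj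
    · simp [hj]
    · refine mul_le_mul_of_nonneg_right ?_ (sq_nonneg _)
      simpa only [sq_abs] using pow_le_pow_left₀ (abs_nonneg _) (hx j hj) 2
  exact (pow_le_pow_iff_left₀ (norm_nonneg _) (by positivity) two_ne_zero).1 hsq

lemma abs_inner_apply_le_of_eigenbasis (hT : T.IsSymmetric) (hb : ∀ j, T (b j) = μ j • b j)
    {lam : ℝ} {x : E} (hx : ∀ j, ⟪b j, x⟫ ≠ 0 → |μ j| ≤ lam) (y : E) :
    |⟪x, T y⟫| ≤ lam * (‖x‖ * ‖y‖) :=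
  calc |⟪x, T y⟫| = |⟪T x, y⟫| := by rw [hT]
    _ ≤ ‖T x‖ * ‖y‖ := abs_real_inner_le_norm _ _
    _ ≤ lam * ‖x‖ * ‖y‖ := by gcongr; exact norm_apply_le_of_eigenbasis hT hb hx
    _ = lam * (‖x‖ * ‖y‖) := mul_assoc _ _ _

lemma inner_eigenbasis_eq_zero_of_simple (hT : T.IsSymmetric) (hb : ∀ j, T (b j) = μ j • b j)
    {i₀ : ι} (hsimple : ∀ i ≠ i₀, μ i ≠ μ i₀) {v x : E} (hv : T v = μ i₀ • v) (hv0 : v ≠ 0)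
    (hvx : ⟪v, x⟫ = 0) : ⟪b i₀, x⟫ = 0 := by
  classical
  have hcoeff : ∀ i ≠ i₀, ⟪b i, v⟫ = 0 := by
    intro i hi
    by_contra hne
    refine hsimple i hi (mul_right_cancel₀ hne ?_)
    rw [← inner_apply_eq_mul_inner_of_eigenbasis hT hb, hv, real_inner_smul_right]
  have hcoeff₀ : ⟪b i₀, v⟫ ≠ 0 := by
    intro h0
    refine hv0 ?_
    have : ∀ i, ⟪b i, v⟫ = 0 := fun i => by
      rcases eq_or_ne i i₀ with rfl | hi
      exacts [h0, hcoeff i hi]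
    simpa [this] using (b.sum_repr' v).symm
  have hexpand : ⟪v, x⟫ = ⟪b i₀, v⟫ * ⟪b i₀, x⟫ := by
    rw [← b.sum_inner_mul_inner, Finset.sum_eq_single i₀, real_inner_comm]
    · intro i _ hi
      rw [real_inner_comm, hcoeff i hi, zero_mul]
    · simp
  rw [hexpand] at hvx
  exact (mul_eq_zero.1 hvx).resolve_left hcoeff₀

end Spectral

section Graph

variable {V : Type*} [Fintype V]

lemma card_mul_card_div_card (U : Finset V) :
    (Fintype.card V : ℝ) * (#U / Fintype.card V) = #U := by
  rcases eq_or_ne (Fintype.card V : ℝ) 0 with h | h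
  · have hV : Fintype.card V = 0 := by exact_mod_cast h
    have hU : #U = 0 := Nat.le_zero.1 (hV ▸ U.card_le_univ)
    simp [hU]
  · exact mul_div_cancel₀ _ h

lemma indicator_dotProduct (U : Finset V) (f : V → ℝ) :
    (U : Set V).indicator 1 ⬝ᵥ f = ∑ v ∈ U, f v := by
  classical
  simp [dotProduct, Set.indicator_apply, Finset.sum_ite_mem]

lemma one_dotProduct_indicator (U : Finset V) : 1 ⬝ᵥ (U : Set V).indicator 1 = (#U : ℝ) := by
  simp [dotProduct_comm 1, indicator_dotProduct]

lemma indicator_dotProduct_self (U : Finset V) :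
    (U : Set V).indicator 1 ⬝ᵥ (U : Set V).indicator 1 = (#U : ℝ) := by
  rw [indicator_dotProduct]
  simp +contextual

noncomputable def centeredIndicator (U : Finset V) : V → ℝ :=
  (U : Set V).indicator 1 - (#U / Fintype.card V : ℝ) • 1

lemma one_dotProduct_centeredIndicator (U : Finset V) : 1 ⬝ᵥ centeredIndicator U = 0 := by
  simp only [centeredIndicator, dotProduct_sub, dotProduct_smul, one_dotProduct_indicator,
    one_dotProduct_one, smul_eq_mul]
  linear_combination -card_mul_card_div_card U

lemma centeredIndicator_dotProduct_self (U : Finset V) :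
    centeredIndicator U ⬝ᵥ centeredIndicator U = #U * (1 - #U / Fintype.card V) := by
  have h := card_mul_card_div_card U
  simp only [centeredIndicator, sub_dotProduct, dotProduct_sub, smul_dotProduct, dotProduct_smul,
    indicator_dotProduct_self, dotProduct_comm _ 1, one_dotProduct_indicator, one_dotProduct_one,
    smul_eq_mul]
  linear_combination (#U / Fintype.card V : ℝ) * h

variable {G : SimpleGraph V} [DecidableRel G.Adj] {d : ℕ}

lemma indicator_dotProduct_adjMatrix_mulVec_indicator (U W : Finset V) :
    (U : Set V).indicator 1 ⬝ᵥ G.adjMatrix ℝ *ᵥ (W : Set V).indicator 1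
      = #{p ∈ U ×ˢ W | G.Adj p.1 p.2} := by
  rw [indicator_dotProduct, Finset.natCast_card_filter, Finset.sum_product]
  refine Finset.sum_congr rfl fun u _ => ?_
  rw [mulVec, dotProduct_comm, indicator_dotProduct]
  simp [adjMatrix_apply]

lemma adjMatrix_mulVec_one_of_isRegularOfDegree (hreg : G.IsRegularOfDegree d) :
    G.adjMatrix ℝ *ᵥ 1 = (d : ℝ) • 1 :=
  funext fun v => by simp [hreg v]

lemma one_dotProduct_adjMatrix_mulVec (hreg : G.IsRegularOfDegree d) (f : V → ℝ) :
    1 ⬝ᵥ G.adjMatrix ℝ *ᵥ f = d * (1 ⬝ᵥ f) := by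
  rw [dotProduct_mulVec, ← mulVec_transpose, transpose_adjMatrix,
    adjMatrix_mulVec_one_of_isRegularOfDegree hreg, smul_dotProduct, smul_eq_mul]

lemma centeredIndicator_dotProduct_adjMatrix_mulVec (hreg : G.IsRegularOfDegree d)
    (U W : Finset V) :
    centeredIndicator U ⬝ᵥ G.adjMatrix ℝ *ᵥ centeredIndicator W
      = #{p ∈ U ×ˢ W | G.Adj p.1 p.2} - d * #U * #W / Fintype.card V := by
  have hW := card_mul_card_div_card W
  simp only [centeredIndicator, mulVec_sub, mulVec_smul, dotProduct_sub, sub_dotProduct,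
    dotProduct_smul, smul_dotProduct, indicator_dotProduct_adjMatrix_mulVec_indicator,
    adjMatrix_mulVec_one_of_isRegularOfDegree hreg, one_dotProduct_adjMatrix_mulVec hreg,
    dotProduct_comm _ 1, one_dotProduct_indicator, one_dotProduct_one, smul_eq_mul]
  linear_combination (#U / Fintype.card V * d : ℝ) * hW

end Graph

open scoped Classical in
lemma IsNDLGraph.abs_dotProduct_adjMatrix_mulVec_le {n d : ℕ} {lam : ℝ}
    {G : SimpleGraph (Fin n)} (h : IsNDLGraph G d lam) {x : Fin n → ℝ} (hx : 1 ⬝ᵥ x = 0)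
    (y : Fin n → ℝ) :
    |x ⬝ᵥ G.adjMatrix ℝ *ᵥ y| ≤ lam * √((x ⬝ᵥ x) * (y ⬝ᵥ y)) := by
  obtain ⟨hreg, i₀, hi₀, hball⟩ := h
  have hA := adjMatrix_isHermitian G
  have hT := isSymmetric_toEuclideanLin_iff.mpr hA
  have hb (j : Fin n) : (G.adjMatrix ℝ).toEuclideanLin (hA.eigenvectorBasis j)
      = adjEigenvalues G j • hA.eigenvectorBasis j :=
    congrArg (WithLp.toLp 2) (hA.mulVec_eigenvectorBasis j)
  have hones : (G.adjMatrix ℝ).toEuclideanLin (WithLp.toLp 2 1)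
      = adjEigenvalues G i₀ • WithLp.toLp 2 1 := by
    rw [hi₀]
    exact congrArg (WithLp.toLp 2) (adjMatrix_mulVec_one_of_isRegularOfDegree hreg)
  have hx' (j : Fin n) (hj : ⟪hA.eigenvectorBasis j, WithLp.toLp 2 x⟫ ≠ 0) :
      |adjEigenvalues G j| ≤ lam := by
    rcases eq_or_ne i₀ j with rfl | hji
    · by_contra! hlt
      rw [hi₀, Nat.abs_cast] at hlt
      refine hj (inner_eigenbasis_eq_zero_of_simple hT hb ?_ hones ?_ ?_)
      · intro i hi heq
        have := hball i hi
        rw [heq, hi₀, Nat.abs_cast] at this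
        linarith
      · intro h0
        simpa using congrArg (fun v : EuclideanSpace ℝ (Fin n) => v i₀) h0
      · rw [EuclideanSpace.inner_toLp_toLp, star_trivial, dotProduct_comm, hx]
    · exact hball j hji.symm
  calc |x ⬝ᵥ G.adjMatrix ℝ *ᵥ y|
      = |⟪WithLp.toLp 2 x, (G.adjMatrix ℝ).toEuclideanLin (WithLp.toLp 2 y)⟫| := by
        rw [dotProduct_comm]; rfl
    _ ≤ lam * (‖WithLp.toLp 2 x‖ * ‖WithLp.toLp 2 y‖) :=
        abs_inner_apply_le_of_eigenbasis hT hb hx' _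
    _ = lam * √((x ⬝ᵥ x) * (y ⬝ᵥ y)) := by
        rw [norm_eq_sqrt_real_inner, norm_eq_sqrt_real_inner,
          ← Real.sqrt_mul real_inner_self_nonneg]
        rfl

/-- **Theorem 5(ii)**: for an `(n,d,λ)`-graph `G` and any vertex subsets `U`, `W`,
`|d|U||W|/n - e(U,W)| ≤ λ √(|U||W|(1-|U|/n)(1-|W|/n))`. -/
theorem edge_distribution_abs {n : ℕ} (G : SimpleGraph (Fin n)) (d : ℕ) (lam : ℝ)
    (h : IsNDLGraph G d lam) (U W : Finset (Fin n)) :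
    |(d : ℝ) * U.card * W.card / n - edgeCountBetween G U W| ≤
      lam * Real.sqrt (U.card * W.card * (1 - U.card / n) * (1 - W.card / n)) := by
  classical
  have hbound := h.abs_dotProduct_adjMatrix_mulVec_le (one_dotProduct_centeredIndicator U)
    (centeredIndicator W)
  rw [centeredIndicator_dotProduct_adjMatrix_mulVec h.1, centeredIndicator_dotProduct_self,
    centeredIndicator_dotProduct_self, Fintype.card_fin] at hbound
  rw [abs_sub_comm, edgeCountBetween]
  convert hbound using 3
  ring

end ZeroForcing
end
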